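/- arXiv:2205.04395 — 4 statements merged into one kernel-verified Lean document; each statement's English description precedes it below -/
import Mathlib

section
/- Let V be a finite-dimensional real inner product space, and let Φ : V → ℝ be continuous, with Φ convex and differentiable along each ray t ↦ t·b from the origin, Φ(0)=0, and such that λ(x,b,t) := (d/ds)|_{s=t} Φ(s·b) is jointly continuous in (b,t) and nondecreasing in t. If λ(b) := lim_{t→∞} λ(b,t) > 0 for every unit vector b ∈ V, then there exist constants C₁, C₂ > 0 such that ‖v‖ ≤ C₁·Φ(v) + C₂ for all v ∈ V. -/
/-!
By compactness of the unit sphere, continuity and monotonicity of `λ(b, t)` upgrade the pointwise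
positivity of `λ(b)` to a uniform bound `λ(b, t) ≥ ε > 0` for all unit `b` and all `t ≥ T`. Hence
`Φ` grows with slope at least `ε` along every ray beyond radius `T`, while on the ball of
radius `T` it is bounded below by continuity.
-/

open Set Filter Topology Metric

theorem IsCompact.exists_pos_forall_le_of_monotone {X : Type*} [TopologicalSpace X]
    {K : Set X} (hK : IsCompact K) (f : X → ℝ → ℝ) (hf : ∀ t, Continuous (f · t))
    (hmono : ∀ x ∈ K, Monotone (f x)) (hpos : ∀ x ∈ K, ∃ t, 0 < f x t) :
    ∃ ε > 0, ∃ T, ∀ x ∈ K, ∀ t, T ≤ t → ε ≤ f x t := by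
  -- `{x | 0 < f x s}` is increasing in `s` only on `K`, so we take unions over `s ≤ t`.
  let U : ℝ → Set X := fun t => ⋃ s ∈ Iic t, {x | 0 < f x s}
  have hU_open : ∀ t, IsOpen (U t) := fun t =>
    isOpen_biUnion fun s _ => isOpen_lt continuous_const (hf s)
  have hU_mono : Monotone U := fun t₁ t₂ h =>
    biUnion_subset_biUnion_left (Iic_subset_Iic.2 h)
  have hK_cover : K ⊆ ⋃ t, U t := fun x hx =>
    let ⟨t, ht⟩ := hpos x hx
    mem_iUnion.2 ⟨t, mem_biUnion (mem_Iic.2 le_rfl) ht⟩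
  obtain ⟨T, hKT⟩ := hK.elim_directed_cover U hU_open hK_cover hU_mono.directed_le
  have hposT : ∀ x ∈ K, 0 < f x T := fun x hx => by
    obtain ⟨s, hsT, hs⟩ := mem_iUnion₂.1 (hKT hx)
    exact hs.trans_le (hmono x hx hsT)
  obtain ⟨ε, hε, hεT⟩ := hK.exists_forall_le' (hf T).continuousOn hposT
  exact ⟨ε, hε, T, fun x hx t ht => (hεT x hx).trans (hmono x hx ht)⟩

theorem add_mul_sub_le_of_le_deriv {g : ℝ → ℝ} (hg : Differentiable ℝ g)
    {ε T : ℝ} (hε : ∀ s, T < s → ε ≤ deriv g s) {t : ℝ} (ht : T ≤ t) :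
    g T + ε * (t - T) ≤ g t := by
  have := (convex_Ici T).mul_sub_le_image_sub_of_le_deriv hg.continuous.continuousOn
    (hg.differentiableOn.mono (subset_univ _))
    (fun s hs => hε s (by rwa [interior_Ici] at hs)) T self_mem_Ici t ht ht
  linarith

theorem exists_mul_norm_le_add_const_of_growth_along_rays {V : Type*}
    [NormedAddCommGroup V] [NormedSpace ℝ V] [ProperSpace V] {Φ : V → ℝ}
    (hΦ : Continuous Φ) {ε T : ℝ} (hε : 0 ≤ ε) (hT : 0 ≤ T)
    (hgrowth : ∀ b : V, ‖b‖ = 1 → ∀ t, T ≤ t → Φ (T • b) + ε * (t - T) ≤ Φ (t • b)) :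
    ∃ c, ∀ v : V, ε * ‖v‖ ≤ Φ v + c := by
  obtain ⟨M, hM⟩ := (isCompact_closedBall (0 : V) T).bddBelow_image hΦ.continuousOn
  have hM_le : ∀ v : V, ‖v‖ ≤ T → M ≤ Φ v := fun v hv =>
    hM (mem_image_of_mem Φ (mem_closedBall_zero_iff.2 hv))
  refine ⟨ε * T - M, fun v => ?_⟩
  rcases le_or_gt ‖v‖ T with hvT | hTv
  · linarith [hM_le v hvT, mul_le_mul_of_nonneg_left hvT hε]
  · have hv : v ≠ 0 := norm_pos_iff.1 (hT.trans_lt hTv)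
    set b := ‖v‖⁻¹ • v
    have hb : ‖b‖ = 1 := norm_smul_inv_norm hv
    have hvb : ‖v‖ • b = v := by
      rw [smul_inv_smul₀ (norm_ne_zero_iff.2 hv)]
    have hTb : M ≤ Φ (T • b) := hM_le _ (by rw [norm_smul, hb, mul_one, Real.norm_of_nonneg hT])
    have := hgrowth b hb ‖v‖ hTv.le
    rw [hvb] at this
    linarith

theorem stmt2_general {V : Type*} [NormedAddCommGroup V] [InnerProductSpace ℝ V]
    [FiniteDimensional ℝ V]
    (Φ : V → ℝ) (hΦcont : Continuous Φ)
    (hdiff : ∀ b : V, ‖b‖ = 1 → Differentiable ℝ fun t : ℝ => Φ (t • b))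
    (lamt : V → ℝ → ℝ)
    (hlamt : ∀ b : V, ‖b‖ = 1 → ∀ t : ℝ, lamt b t = deriv (fun s : ℝ => Φ (s • b)) t)
    (hcont : Continuous fun p : V × ℝ => lamt p.1 p.2)
    (hmono : ∀ b : V, ‖b‖ = 1 → Monotone (lamt b))
    (lam : V → EReal)
    (hlam : ∀ b : V, ‖b‖ = 1 →
      Tendsto (fun t : ℝ => ((lamt b t : ℝ) : EReal)) atTop (𝓝 (lam b)))
    (hpos : ∀ b : V, ‖b‖ = 1 → 0 < lam b) :
    ∃ C₁ C₂ : ℝ, 0 < C₁ ∧ 0 < C₂ ∧ ∀ v : V, ‖v‖ ≤ C₁ * Φ v + C₂ := by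
  have hlamt_pos : ∀ b ∈ sphere (0 : V) 1, ∃ t, 0 < lamt b t := fun b hb => by
    rw [mem_sphere_zero_iff_norm] at hb
    obtain ⟨t, ht⟩ := ((hlam b hb).eventually (lt_mem_nhds (hpos b hb))).exists
    exact ⟨t, EReal.coe_pos.1 ht⟩
  obtain ⟨ε, hε, T₀, hεT₀⟩ := (isCompact_sphere (0 : V) 1).exists_pos_forall_le_of_monotone
    lamt (fun t => hcont.comp (continuous_id.prodMk continuous_const))
    (fun b hb => hmono b (mem_sphere_zero_iff_norm.1 hb)) hlamt_pos
  set T := max T₀ 0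
  have hgrowth : ∀ b : V, ‖b‖ = 1 → ∀ t, T ≤ t → Φ (T • b) + ε * (t - T) ≤ Φ (t • b) :=
    fun b hb t ht => add_mul_sub_le_of_le_deriv (hdiff b hb) (fun s hs => by
      rw [← hlamt b hb s]
      exact hεT₀ b (mem_sphere_zero_iff_norm.2 hb) s ((le_max_left _ _).trans hs.le)) ht
  obtain ⟨c, hc⟩ := exists_mul_norm_le_add_const_of_growth_along_rays hΦcont hε.le
    (le_max_right _ _) hgrowth
  refine ⟨ε⁻¹, max (c / ε) 1, inv_pos.2 hε, lt_max_of_lt_right one_pos, fun v => ?_⟩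
  calc ‖v‖ = ε⁻¹ * (ε * ‖v‖) := by field_simp
    _ ≤ ε⁻¹ * (Φ v + c) := by gcongr; exact hc v
    _ = ε⁻¹ * Φ v + c / ε := by ring
    _ ≤ ε⁻¹ * Φ v + max (c / ε) 1 := by gcongr; exact le_max_left _ _

/-- Conversely, positivity of all maximal weights in unit directions implies linear
properness of `Φ`. -/
theorem stmt2 {V : Type*} [NormedAddCommGroup V] [InnerProductSpace ℝ V]
    [FiniteDimensional ℝ V]
    (Φ : V → ℝ) (hΦcont : Continuous Φ) (h0 : Φ 0 = 0)
    (hconv : ∀ b : V, ‖b‖ = 1 → ConvexOn ℝ univ fun t : ℝ => Φ (t • b))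
    (hdiff : ∀ b : V, ‖b‖ = 1 → Differentiable ℝ fun t : ℝ => Φ (t • b))
    (lamt : V → ℝ → ℝ)
    (hlamt : ∀ b : V, ‖b‖ = 1 → ∀ t : ℝ, lamt b t = deriv (fun s : ℝ => Φ (s • b)) t)
    (hcont : Continuous fun p : V × ℝ => lamt p.1 p.2)
    (hmono : ∀ b : V, ‖b‖ = 1 → Monotone (lamt b))
    (lam : V → EReal)
    (hlam : ∀ b : V, ‖b‖ = 1 →
      Tendsto (fun t : ℝ => ((lamt b t : ℝ) : EReal)) atTop (𝓝 (lam b)))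
    (hpos : ∀ b : V, ‖b‖ = 1 → 0 < lam b) :
    ∃ C₁ C₂ : ℝ, 0 < C₁ ∧ 0 < C₂ ∧ ∀ v : V, ‖v‖ ≤ C₁ * Φ v + C₂ :=
  stmt2_general Φ hΦcont hdiff lamt hlamt hcont hmono lam hlam hpos
end

section
/- Let A and B be commuting symmetric endomorphisms of a finite-dimensional real inner product space. Then there exists δ > 0 such that for all ε ∈ (0, δ), ker(A + ε·B) = ker A ∩ ker B. -/
/-!
Commuting symmetric maps are simultaneously diagonalisable, and on the joint eigenspace with
eigenvalues `(α, β)` the map `A + ε • B` acts as `α + ε β`. For `(α, β) ≠ (0, 0)` this vanishes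
only if `β ≠ 0` and `ε = -α / β`, so below the smallest positive such ratio it does not vanish.
The kernel of the symmetric map `A + ε • B` is then orthogonal to every joint eigenspace except
the one for `(0, 0)`, which is `ker A ⊓ ker B`; as the joint eigenspaces are orthogonal and span
the space, the kernel lies in that one.
-/

open Set

open Module.End

namespace Submodule

variable {𝕜 E : Type*} [RCLike 𝕜] [NormedAddCommGroup E] [InnerProductSpace 𝕜 E]

theorem orthogonal_eq_of_isOrtho_of_sup_eq_top {K L : Submodule 𝕜 E} (hKL : K ⟂ L)
    (hsup : K ⊔ L = ⊤) : Lᗮ = K := by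
  have h := sup_inf_assoc_of_le (y := L) (z := Lᗮ) hKL.le
  rwa [hsup, top_inf_eq, (orthogonal_disjoint L).eq_bot, sup_bot_eq] at h

theorem orthogonal_iSup_ne_eq_of_orthogonalFamily {ι : Type*} {P : ι → Submodule 𝕜 E}
    (hP : OrthogonalFamily 𝕜 (fun i => P i) fun i => (P i).subtypeₗᵢ) (htop : ⨆ i, P i = ⊤)
    (i : ι) : (⨆ (j) (_ : j ≠ i), P j)ᗮ = P i := by
  classical
  refine orthogonal_eq_of_isOrtho_of_sup_eq_top ?_ ?_
  · exact isOrtho_iSup_right.mpr fun j => isOrtho_iSup_right.mpr fun hj => hP.isOrtho hj.symm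
  · rwa [← iSup_split_single P i]

end Submodule

namespace LinearMap.IsSymmetric

variable {𝕜 E : Type*} [RCLike 𝕜] [NormedAddCommGroup E] [InnerProductSpace 𝕜 E]

theorem ker_le_of_orthogonalFamily {T : E →ₗ[𝕜] E} (hT : T.IsSymmetric) {ι : Type*}
    {P : ι → Submodule 𝕜 E} (hP : OrthogonalFamily 𝕜 (fun i => P i) fun i => (P i).subtypeₗᵢ)
    (htop : ⨆ i, P i = ⊤) (i : ι) (hne : ∀ j ≠ i, ∃ μ ≠ 0, P j ≤ eigenspace T μ) :
    ker T ≤ P i := by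
  rw [← Submodule.orthogonal_iSup_ne_eq_of_orthogonalFamily hP htop i, ← eigenspace_zero]
  refine (Submodule.isOrtho_iSup_right.mpr fun j => Submodule.isOrtho_iSup_right.mpr
    fun hj => ?_).le
  obtain ⟨μ, hμ, hPj⟩ := hne j hj
  exact (hT.orthogonalFamily_eigenspaces.isOrtho hμ.symm).mono_right hPj

theorem iSup_eigenspace_inf_eigenspace_eq_top_of_commute [FiniteDimensional 𝕜 E]
    {A B : E →ₗ[𝕜] E} (hA : A.IsSymmetric) (hB : B.IsSymmetric) (hAB : Commute A B) :
    ⨆ i : 𝕜 × 𝕜, eigenspace A i.2 ⊓ eigenspace B i.1 = ⊤ := by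
  rw [iSup_prod, iSup_comm]
  exact hA.iSup_iSup_eigenspace_inf_eigenspace_eq_top_of_commute hB hAB

end LinearMap.IsSymmetric

theorem Module.End.eigenspace_inf_eigenspace_le_eigenspace_add_smul {R M : Type*} [CommRing R]
    [AddCommGroup M] [Module R M] (A B : End R M) (α β c : R) :
    eigenspace A α ⊓ eigenspace B β ≤ eigenspace (A + c • B) (α + c * β) := by
  intro x hx
  obtain ⟨hA, hB⟩ := Submodule.mem_inf.mp hx
  rw [mem_eigenspace_iff] at hA hB ⊢
  rw [LinearMap.add_apply, LinearMap.smul_apply, hA, hB, add_smul, smul_smul]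

theorem exists_pos_forall_mem_Ioo_notMem {S : Set ℝ} (hS : S.Finite) :
    ∃ δ > 0, ∀ ε ∈ Ioo 0 δ, ε ∉ S := by
  obtain ⟨δ, hδ, hball⟩ :=
    Metric.isOpen_iff.mp (hS.sdiff (t := {0})).isClosed.isOpen_compl 0 (by simp)
  refine ⟨δ, hδ, fun ε hε hεS => hball ?_ ⟨hεS, hε.1.ne'⟩⟩
  rw [Real.ball_eq_Ioo]
  constructor <;> linarith [hε.1, hε.2]

theorem Module.End.exists_pos_forall_hasEigenvalue_add_mul_eq_zero {V : Type*} [AddCommGroup V]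
    [Module ℝ V] [FiniteDimensional ℝ V] (A B : End ℝ V) :
    ∃ δ > 0, ∀ ε ∈ Ioo 0 δ, ∀ α β, A.HasEigenvalue α → B.HasEigenvalue β →
      α + ε * β = 0 → β = 0 := by
  have hfin : {ε : ℝ | ∃ α β, A.HasEigenvalue α ∧ B.HasEigenvalue β ∧ β ≠ 0 ∧
      α + ε * β = 0}.Finite := by
    refine ((A.finite_hasEigenvalue.prod B.finite_hasEigenvalue).image
      fun p => -p.1 / p.2).subset ?_
    rintro ε ⟨α, β, hα, hβ, hβ0, h⟩
    exact ⟨(α, β), ⟨hα, hβ⟩, by field_simp; linarith⟩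
  obtain ⟨δ, hδ, hS⟩ := exists_pos_forall_mem_Ioo_notMem hfin
  exact ⟨δ, hδ, fun ε hε α β hα hβ h => by_contra fun hβ0 => hS ε hε ⟨α, β, hα, hβ, hβ0, h⟩⟩

/-- For commuting symmetric endomorphisms `A`, `B` of a finite-dimensional real inner
product space, `ker (A + ε B) = ker A ⊓ ker B` for all sufficiently small `ε > 0`. -/
theorem stmt4 {V : Type*} [NormedAddCommGroup V] [InnerProductSpace ℝ V]
    [FiniteDimensional ℝ V]
    (A B : V →ₗ[ℝ] V) (hA : A.IsSymmetric) (hB : B.IsSymmetric)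
    (hcomm : A ∘ₗ B = B ∘ₗ A) :
    ∃ δ > (0 : ℝ), ∀ ε ∈ Ioo (0 : ℝ) δ,
      LinearMap.ker (A + ε • B) = LinearMap.ker A ⊓ LinearMap.ker B := by
  obtain ⟨δ, hδ, hgood⟩ := exists_pos_forall_hasEigenvalue_add_mul_eq_zero A B
  refine ⟨δ, hδ, fun ε hε => le_antisymm ?_ ?_⟩
  · have hne : ∀ i : ℝ × ℝ, i ≠ (0, 0) →
        ∃ μ ≠ 0, eigenspace A i.2 ⊓ eigenspace B i.1 ≤ eigenspace (A + ε • B) μ := by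
      intro i hi
      by_cases hbot : eigenspace A i.2 ⊓ eigenspace B i.1 = ⊥
      · exact ⟨1, one_ne_zero, hbot.le.trans bot_le⟩
      obtain ⟨x, ⟨hxA, hxB⟩, hx0⟩ := Submodule.exists_mem_ne_zero_of_ne_bot hbot
      refine ⟨i.2 + ε * i.1, fun h => hi ?_, eigenspace_inf_eigenspace_le_eigenspace_add_smul ..⟩
      have hβ := hgood ε hε _ _ (hasEigenvalue_of_hasEigenvector ⟨hxA, hx0⟩)
        (hasEigenvalue_of_hasEigenvector ⟨hxB, hx0⟩) h
      exact Prod.ext hβ (by simpa [hβ] using h)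
    simpa only [eigenspace_zero] using
      (hA.add (hB.smul (conj_trivial ε))).ker_le_of_orthogonalFamily
        (hA.orthogonalFamily_eigenspace_inf_eigenspace hB)
        (hA.iSup_eigenspace_inf_eigenspace_eq_top_of_commute hB hcomm) (0, 0) hne
  · intro x hx
    obtain ⟨hxA, hxB⟩ := Submodule.mem_inf.mp hx
    rw [LinearMap.mem_ker] at hxA hxB ⊢
    rw [LinearMap.add_apply, LinearMap.smul_apply, hxA, hxB, smul_zero, add_zero]
end

section
/- Let A, B be commuting symmetric endomorphisms of a finite-dimensional real inner product space V, and let v ∈ V. Suppose the limits y := lim_{t→∞} exp(tA)·v and z := lim_{t→∞} exp(tB)·y exist. Then there exists δ > 0 such that for all ε ∈ (0, δ), lim_{t→∞} exp(t(A + εB))·v = z. -/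
/-!
In an orthonormal eigenbasis of `A` the coordinates of `exp(tA) v` are `e^{t μᵢ} cᵢ`. Convergence
forces `cᵢ = 0` whenever `μᵢ > 0`, so `exp(tA) v - y` only involves the eigenvalues `μᵢ < 0`
and decays like `e^{-κ t}` for some `κ > 0`. Since `A` and `B` commute,
`exp(t(A + εB)) v = exp(εtB) y + exp(εtB) (exp(tA) v - y)`; the first term tends to `z`, and the
second is at most `C e^{(ε‖B‖ - κ) t}`, which tends to `0` as soon as `ε‖B‖ < κ`.
-/

open Set Filter Topology
open scoped InnerProductSpace

section Exponential

variable {V : Type*} [NormedAddCommGroup V] [NormedSpace ℝ V] [CompleteSpace V]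

lemma ContinuousLinearMap.norm_exp_le_exp_norm (T : V →L[ℝ] V) :
    ‖NormedSpace.exp T‖ ≤ Real.exp ‖T‖ := by
  refine (NormedSpace.exp_series_hasSum_exp' (𝕂 := ℝ) T).norm_le_of_bounded
    (by simpa [Real.exp_eq_exp_ℝ] using NormedSpace.expSeries_div_hasSum_exp ‖T‖) fun n => ?_
  rw [norm_smul, norm_inv, Real.norm_natCast, div_eq_inv_mul]
  gcongr
  rcases n with _ | n
  · rw [pow_zero, pow_zero]; exact norm_id_le
  · exact norm_pow_le' T n.succ_pos

lemma ContinuousLinearMap.exp_apply_of_apply_eq_smul {T : V →L[ℝ] V} {x : V} {μ : ℝ}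
    (h : T x = μ • x) : NormedSpace.exp T x = Real.exp μ • x := by
  have hpow (n : ℕ) : (T ^ n) x = μ ^ n • x := by
    induction n with
    | zero => simp
    | succ n ih => rw [pow_succ, mul_apply_eq_comp, h, map_smul, ih, smul_smul, pow_succ']
  refine ((NormedSpace.exp_series_hasSum_exp' (𝕂 := ℝ) T).mapL (apply ℝ V x)).unique ?_
  rw [Real.exp_eq_exp_ℝ]
  convert (NormedSpace.exp_series_hasSum_exp' (𝕂 := ℝ) μ).smul_const x using 1
  ext n
  simp [hpow, smul_smul]

lemma ContinuousLinearMap.exp_add_of_commute {A B : V →L[ℝ] V} (h : Commute A B) :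
    NormedSpace.exp (A + B) = NormedSpace.exp A * NormedSpace.exp B :=
  NormedSpace.exp_add_of_commute_of_mem_ball (𝕂 := ℝ) h
    ((NormedSpace.expSeries_radius_eq_top ℝ (V →L[ℝ] V)).symm ▸ edist_lt_top _ _)
    ((NormedSpace.expSeries_radius_eq_top ℝ (V →L[ℝ] V)).symm ▸ edist_lt_top _ _)

theorem tendsto_exp_smul_add_smul_apply_of_decay {A B : V →L[ℝ] V} (hAB : Commute A B)
    {v y z : V} {κ C : ℝ}
    (hdecay : ∀ t ≥ 0, ‖NormedSpace.exp (t • A) v - y‖ ≤ C * Real.exp (-κ * t))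
    (hz : Tendsto (fun t : ℝ => NormedSpace.exp (t • B) y) atTop (𝓝 z))
    {ε : ℝ} (hε : 0 < ε) (hεκ : ε * ‖B‖ < κ) :
    Tendsto (fun t : ℝ => NormedSpace.exp (t • (A + ε • B)) v) atTop (𝓝 z) := by
  have hsplit (t : ℝ) : NormedSpace.exp (t • (A + ε • B)) v =
      NormedSpace.exp ((ε * t) • B) y +
        NormedSpace.exp ((ε * t) • B) (NormedSpace.exp (t • A) v - y) := by
    rw [← map_add, add_sub_cancel, smul_add, smul_smul, mul_comm, add_comm,
      ContinuousLinearMap.exp_add_of_commute ((hAB.symm.smul_left _).smul_right _),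
      mul_apply_eq_comp]
  have hbound : ∀ᶠ t in atTop,
      ‖NormedSpace.exp ((ε * t) • B) (NormedSpace.exp (t • A) v - y)‖ ≤
        C * Real.exp ((ε * ‖B‖ - κ) * t) := by
    filter_upwards [eventually_ge_atTop 0] with t ht
    calc _ ≤ ‖NormedSpace.exp ((ε * t) • B)‖ * ‖NormedSpace.exp (t • A) v - y‖ :=
          ContinuousLinearMap.le_opNorm _ _
      _ ≤ Real.exp ‖(ε * t) • B‖ * (C * Real.exp (-κ * t)) :=
          mul_le_mul (ContinuousLinearMap.norm_exp_le_exp_norm _) (hdecay t ht) (norm_nonneg _)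
            (Real.exp_pos _).le
      _ = C * Real.exp ((ε * ‖B‖ - κ) * t) := by
          rw [norm_smul, Real.norm_of_nonneg (by positivity), mul_left_comm, ← Real.exp_add]
          ring_nf
  have hrate : Tendsto (fun t => C * Real.exp ((ε * ‖B‖ - κ) * t)) atTop (𝓝 0) := by
    simpa using (Real.tendsto_exp_atBot.comp
      (tendsto_id.const_mul_atTop_of_neg (sub_neg.2 hεκ))).const_mul C
  simpa only [hsplit, add_zero, Function.comp_def, id] using
    (hz.comp (tendsto_id.const_mul_atTop hε)).add
      (squeeze_zero_norm' hbound hrate)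

end Exponential

lemma Real.eq_zero_of_tendsto_exp_mul_mul {μ c d : ℝ} (hμ : 0 < μ)
    (h : Tendsto (fun t => Real.exp (t * μ) * c) atTop (𝓝 d)) : c = 0 := by
  have hdecay : Tendsto (fun t => Real.exp (-(t * μ))) atTop (𝓝 0) :=
    Real.tendsto_exp_neg_atTop_nhds_zero.comp (tendsto_id.atTop_mul_const hμ)
  have hc := hdecay.mul h
  simp only [zero_mul, ← mul_assoc, ← Real.exp_add, neg_add_cancel, Real.exp_zero, one_mul]
    at hc
  exact tendsto_nhds_unique tendsto_const_nhds hc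

lemma Real.abs_exp_mul_mul_sub_le_of_tendsto {μ c d κ : ℝ}
    (h : Tendsto (fun t => Real.exp (t * μ) * c) atTop (𝓝 d)) (hκ : μ < 0 → κ ≤ -μ)
    {t : ℝ} (ht : 0 ≤ t) : |Real.exp (t * μ) * c - d| ≤ |c| * Real.exp (-κ * t) := by
  rcases lt_trichotomy μ 0 with hμ | rfl | hμ
  · have hd : d = 0 := tendsto_nhds_unique h <| by
      simpa using (Real.tendsto_exp_atBot.comp (tendsto_id.atTop_mul_const_of_neg hμ)).mul_const c
    rw [hd, sub_zero, abs_mul, Real.abs_exp, mul_comm]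
    refine mul_le_mul_of_nonneg_left (Real.exp_le_exp.2 ?_) (abs_nonneg c)
    nlinarith [mul_le_mul_of_nonneg_left (hκ hμ) ht]
  · simp only [mul_zero, Real.exp_zero, one_mul] at h ⊢
    rw [tendsto_nhds_unique h tendsto_const_nhds, sub_self, abs_zero]
    positivity
  · have hc := Real.eq_zero_of_tendsto_exp_mul_mul hμ h
    simp only [hc, mul_zero] at h ⊢
    rw [tendsto_nhds_unique h tendsto_const_nhds, sub_zero, abs_zero]
    positivity

lemma exists_pos_le_neg_of_neg {ι : Type*} [Finite ι] (μ : ι → ℝ) :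
    ∃ κ > 0, ∀ i, μ i < 0 → κ ≤ -μ i := by
  have hsmall : ∀ᶠ κ in 𝓝[>] (0 : ℝ), ∀ i, μ i < 0 → κ ≤ -μ i := by
    refine Filter.eventually_all.2 fun i => ?_
    by_cases hi : μ i < 0
    · exact ((eventually_le_nhds (neg_pos.2 hi)).filter_mono nhdsWithin_le_nhds).mono
        fun _ h _ => h
    · exact Eventually.of_forall fun _ h => absurd h hi
  obtain ⟨κ, hκ, hκpos⟩ := (hsmall.and self_mem_nhdsWithin).exists
  exact ⟨κ, hκpos, hκ⟩

lemma OrthonormalBasis.norm_le_sum_norm_repr {ι 𝕜 E : Type*} [Fintype ι] [RCLike 𝕜]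
    [NormedAddCommGroup E] [InnerProductSpace 𝕜 E] (b : OrthonormalBasis ι 𝕜 E) (x : E) :
    ‖x‖ ≤ ∑ i, ‖b.repr x i‖ := by
  conv_lhs => rw [← b.sum_repr x]
  refine norm_sum_le_of_le _ fun i _ => ?_
  rw [norm_smul, b.orthonormal.1 i, mul_one]

section Symmetric

variable {V : Type*} [NormedAddCommGroup V] [InnerProductSpace ℝ V] [FiniteDimensional ℝ V]

lemma LinearMap.IsSymmetric.exists_norm_exp_smul_apply_sub_le {A : V →L[ℝ] V}
    (hA : (A : V →ₗ[ℝ] V).IsSymmetric) {v y : V}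
    (hy : Tendsto (fun t : ℝ => NormedSpace.exp (t • A) v) atTop (𝓝 y)) :
    ∃ κ > 0, ∃ C, ∀ t ≥ 0,
      ‖NormedSpace.exp (t • A) v - y‖ ≤ C * Real.exp (-κ * t) := by
  set b := hA.eigenvectorBasis rfl
  set μ := hA.eigenvalues rfl
  have hrepr (t : ℝ) (i) :
      b.repr (NormedSpace.exp (t • A) v) i = Real.exp (t * μ i) * b.repr v i := by
    have hexp : IsSelfAdjoint (NormedSpace.exp (t • A)) :=
      ((IsSelfAdjoint.all t).smul hA.isSelfAdjoint).exp
    have hAb : A (b i) = μ i • b i := hA.apply_eigenvectorBasis rfl i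
    have hb : (t • A) (b i) = (t * μ i) • b i := by
      rw [← smul_smul, ← hAb]
      rfl
    have hsymm :
        ⟪NormedSpace.exp (t • A) (b i), v⟫_ℝ = ⟪b i, NormedSpace.exp (t • A) v⟫_ℝ :=
      hexp.isSymmetric _ _
    rw [b.repr_apply_apply, ← hsymm, ContinuousLinearMap.exp_apply_of_apply_eq_smul hb,
      real_inner_smul_left, b.repr_apply_apply]
  have hcoord (i) :
      Tendsto (fun t => Real.exp (t * μ i) * b.repr v i) atTop (𝓝 (b.repr y i)) := by
    simpa only [Function.comp_def, hrepr] using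
      ((PiLp.continuous_apply 2 _ i).comp b.repr.continuous).continuousAt.tendsto.comp hy
  obtain ⟨κ, hκ, hκμ⟩ := exists_pos_le_neg_of_neg μ
  refine ⟨κ, hκ, ∑ i, |b.repr v i|, fun t ht => ?_⟩
  calc ‖NormedSpace.exp (t • A) v - y‖
      ≤ ∑ i, |b.repr (NormedSpace.exp (t • A) v - y) i| := b.norm_le_sum_norm_repr _
    _ ≤ ∑ i, |b.repr v i| * Real.exp (-κ * t) := by
      refine Finset.sum_le_sum fun i _ => ?_
      rw [map_sub, PiLp.sub_apply, hrepr]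
      exact Real.abs_exp_mul_mul_sub_le_of_tendsto (hcoord i) (hκμ i) ht
    _ = (∑ i, |b.repr v i|) * Real.exp (-κ * t) := Finset.sum_mul _ _ _ |>.symm

end Symmetric

theorem stmt5_general {V : Type*} [NormedAddCommGroup V] [InnerProductSpace ℝ V]
    [FiniteDimensional ℝ V]
    (A B : V →L[ℝ] V)
    (hA : ∀ v w : V, inner ℝ (A v) w = (inner ℝ v (A w) : ℝ))
    (hcomm : A * B = B * A)
    (v y z : V)
    (hy : Tendsto (fun t : ℝ => NormedSpace.exp (t • A) v) atTop (𝓝 y))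
    (hz : Tendsto (fun t : ℝ => NormedSpace.exp (t • B) y) atTop (𝓝 z)) :
    ∃ δ > (0 : ℝ), ∀ ε ∈ Ioo (0 : ℝ) δ,
      Tendsto (fun t : ℝ => NormedSpace.exp (t • (A + ε • B)) v) atTop (𝓝 z) := by
  obtain ⟨κ, hκ, C, hdecay⟩ := LinearMap.IsSymmetric.exists_norm_exp_smul_apply_sub_le hA hy
  refine ⟨κ / (‖B‖ + 1), by positivity, fun ε ⟨hε, hεδ⟩ => ?_⟩
  refine tendsto_exp_smul_add_smul_apply_of_decay hcomm hdecay hz hε ?_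
  calc ε * ‖B‖ ≤ ε * (‖B‖ + 1) := by linarith
    _ < κ := (lt_div_iff₀ (by positivity)).1 hεδ

/-- If `y = lim_{t→∞} exp(tA) v` and `z = lim_{t→∞} exp(tB) y` exist for commuting
symmetric endomorphisms `A, B`, then `exp(t(A + εB)) v → z` for all small `ε > 0`. -/
theorem stmt5 {V : Type*} [NormedAddCommGroup V] [InnerProductSpace ℝ V]
    [FiniteDimensional ℝ V]
    (A B : V →L[ℝ] V)
    (hA : ∀ v w : V, inner ℝ (A v) w = (inner ℝ v (A w) : ℝ))
    (hB : ∀ v w : V, inner ℝ (B v) w = (inner ℝ v (B w) : ℝ))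
    (hcomm : A * B = B * A)
    (v y z : V)
    (hy : Tendsto (fun t : ℝ => NormedSpace.exp (t • A) v) atTop (𝓝 y))
    (hz : Tendsto (fun t : ℝ => NormedSpace.exp (t • B) y) atTop (𝓝 z)) :
    ∃ δ > (0 : ℝ), ∀ ε ∈ Ioo (0 : ℝ) δ,
      Tendsto (fun t : ℝ => NormedSpace.exp (t • (A + ε • B)) v) atTop (𝓝 z) :=
  stmt5_general A B hA hcomm v y z hy hz
end

section
/- Let f : [0,∞) → ℝ be convex and differentiable with f(0) = 0 and f(t₀) known at some t₀ > 0. For a ≥ t₀, f(a) ≥ f(t₀) + (a − t₀)·f'(t₀). Consequently, if additionally f(a)/a < 1/n and ‖·‖-normalized data bₙ := βₙ/‖βₙ‖ with aₙ = ‖βₙ‖ → ∞ satisfy f_{bₙ}(aₙ)/aₙ < 1/n, where each f_b is convex differentiable with f_b(0)=0 and (b,t) ↦ f_b'(t) continuous, then any limit point b₀ of (bₙ) satisfies f'_{b₀}(t₀) ≤ 0 for every t₀ > 0. -/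
/-!
For a convex differentiable `f` with `f 0 = 0`, two tangent-line estimates (at `0` and at `t₀`)
give `t₀ f'(0) + (a - t₀) f'(t₀) ≤ f a` for `a ≥ t₀`. Dividing by `a = ‖βₙ‖` and using
`f_{bₙ}(a)/a < 1/n`, the quantity `f'_{bₙ}(t₀) (1 - t₀/a)` is bounded by a term tending to `0`,
while by joint continuity of the derivative it tends to `f'_{b₀}(t₀)`.
-/

open Set Filter Topology

theorem ConvexOn.add_sub_mul_deriv_le {S : Set ℝ} {f : ℝ → ℝ} {x y : ℝ}
    (hfc : ConvexOn ℝ S f) (hx : x ∈ S) (hy : y ∈ S) (hxy : x ≤ y)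
    (hfd : DifferentiableAt ℝ f x) :
    f x + (y - x) * deriv f x ≤ f y := by
  rcases hxy.eq_or_lt with rfl | hlt
  · simp
  · have hslope := hfc.deriv_le_slope hx hy hlt hfd
    rw [slope_def_field, le_div_iff₀ (sub_pos.2 hlt)] at hslope
    linarith

theorem ConvexOn.mul_deriv_zero_add_sub_mul_deriv_le {f : ℝ → ℝ} {t a : ℝ}
    (hfc : ConvexOn ℝ (Ici 0) f) (hfd : Differentiable ℝ f) (h0 : f 0 = 0)
    (ht : 0 ≤ t) (hta : t ≤ a) :
    t * deriv f 0 + (a - t) * deriv f t ≤ f a := by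
  have hzero := hfc.add_sub_mul_deriv_le self_mem_Ici ht ht (hfd 0)
  have ht_a := hfc.add_sub_mul_deriv_le ht (ht.trans hta) hta (hfd t)
  rw [h0, sub_zero] at hzero
  linarith

theorem nonpos_of_tendsto_deriv_of_div_le {ι : Type*} {l : Filter ι} [l.NeBot]
    {g : ι → ℝ → ℝ} {a ε : ι → ℝ} {t d₀ L : ℝ}
    (hconv : ∀ i, ConvexOn ℝ (Ici 0) (g i)) (hdiff : ∀ i, Differentiable ℝ (g i))
    (h0 : ∀ i, g i 0 = 0) (ht : 0 ≤ t) (ha : Tendsto a l atTop) (hε : Tendsto ε l (𝓝 0))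
    (hsmall : ∀ i, g i (a i) / a i ≤ ε i)
    (hd₀ : Tendsto (fun i => deriv (g i) 0) l (𝓝 d₀))
    (hL : Tendsto (fun i => deriv (g i) t) l (𝓝 L)) :
    L ≤ 0 := by
  have hbound : ∀ᶠ i in l,
      deriv (g i) t * (1 - t / a i) ≤ ε i - t * deriv (g i) 0 / a i := by
    filter_upwards [ha.eventually_ge_atTop t, ha.eventually_gt_atTop 0] with i hta hpos
    have htangent := (hconv i).mul_deriv_zero_add_sub_mul_deriv_le (hdiff i) (h0 i) ht hta
    have hdiv := div_le_div_of_nonneg_right htangent hpos.le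
    have hsplit : deriv (g i) t * (1 - t / a i) + t * deriv (g i) 0 / a i
        = (t * deriv (g i) 0 + (a i - t) * deriv (g i) t) / a i := by
      field_simp
      ring
    linarith [hsmall i]
  have hlhs : Tendsto (fun i => deriv (g i) t * (1 - t / a i)) l (𝓝 L) := by
    simpa using hL.mul ((tendsto_const_nhds (x := (1 : ℝ))).sub (tendsto_const_nhds.div_atTop ha))
  have hrhs : Tendsto (fun i => ε i - t * deriv (g i) 0 / a i) l (𝓝 0) := by
    simpa using hε.sub ((tendsto_const_nhds.mul hd₀).div_atTop ha)
  exact le_of_tendsto_of_tendsto hlhs hrhs hbound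

theorem stmt19_general {V : Type*} [NormedAddCommGroup V] [InnerProductSpace ℝ V]
    (fb : V → ℝ → ℝ)
    (hconv : ∀ b : V, ‖b‖ = 1 → ConvexOn ℝ (Ici (0 : ℝ)) (fb b))
    (hdiff : ∀ b : V, ‖b‖ = 1 → Differentiable ℝ (fb b))
    (h0 : ∀ b : V, ‖b‖ = 1 → fb b 0 = 0)
    (hcont : Continuous fun p : V × ℝ => deriv (fb p.1) p.2)
    (β : ℕ → V) (hβ : ∀ n : ℕ, 1 ≤ n → β n ≠ 0)
    (hnorm : Tendsto (fun n => ‖β n‖) atTop atTop)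
    (hsmall : ∀ n : ℕ, 1 ≤ n →
      fb (‖β n‖⁻¹ • β n) ‖β n‖ / ‖β n‖ < 1 / (n : ℝ))
    (b₀ : V) (ψ : ℕ → ℕ) (hψ : StrictMono ψ) (hψ1 : ∀ k, 1 ≤ ψ k)
    (hlim : Tendsto (fun k => ‖β (ψ k)‖⁻¹ • β (ψ k)) atTop (𝓝 b₀)) :
    (∀ (f : ℝ → ℝ), ConvexOn ℝ (Ici (0 : ℝ)) f → Differentiable ℝ f → f 0 = 0 →
      ∀ t₀ a : ℝ, 0 < t₀ → t₀ ≤ a → f t₀ + (a - t₀) * deriv f t₀ ≤ f a) ∧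
    ∀ t₀ : ℝ, 0 < t₀ → deriv (fb b₀) t₀ ≤ 0 := by
  refine ⟨fun f hf hfd _ t₀ a ht hta =>
    hf.add_sub_mul_deriv_le ht.le (ht.le.trans hta) hta (hfd t₀), fun t₀ ht₀ => ?_⟩
  have hunit : ∀ k, ‖‖β (ψ k)‖⁻¹ • β (ψ k)‖ = 1 := fun k => norm_smul_inv_norm (hβ _ (hψ1 k))
  have hderiv : ∀ t, Tendsto (fun k => deriv (fb (‖β (ψ k)‖⁻¹ • β (ψ k))) t) atTop
      (𝓝 (deriv (fb b₀) t)) := fun t =>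
    (hcont.tendsto (b₀, t)).comp (hlim.prodMk_nhds tendsto_const_nhds)
  have hψ_atTop : Tendsto (fun k => (ψ k : ℝ)) atTop atTop :=
    tendsto_natCast_atTop_atTop.comp hψ.tendsto_atTop
  exact nonpos_of_tendsto_deriv_of_div_le (fun k => hconv _ (hunit k))
    (fun k => hdiff _ (hunit k)) (fun k => h0 _ (hunit k)) ht₀.le
    (hnorm.comp hψ.tendsto_atTop) (tendsto_const_nhds.div_atTop hψ_atTop)
    (fun k => (hsmall _ (hψ1 k)).le) (hderiv 0) (hderiv t₀)

/-- Convexity estimate `f(a) ≥ f(t₀) + (a − t₀) f'(t₀)`, and its consequence: if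
`f_{bₙ}(‖βₙ‖)/‖βₙ‖ < 1/n` with `‖βₙ‖ → ∞` and `bₙ = βₙ/‖βₙ‖ → b₀` along a subsequence,
then `f'_{b₀}(t₀) ≤ 0` for every `t₀ > 0`. -/
theorem stmt19 {V : Type*} [NormedAddCommGroup V] [InnerProductSpace ℝ V]
    [FiniteDimensional ℝ V]
    (fb : V → ℝ → ℝ)
    (hconv : ∀ b : V, ‖b‖ = 1 → ConvexOn ℝ (Ici (0 : ℝ)) (fb b))
    (hdiff : ∀ b : V, ‖b‖ = 1 → Differentiable ℝ (fb b))
    (h0 : ∀ b : V, ‖b‖ = 1 → fb b 0 = 0)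
    (hcont : Continuous fun p : V × ℝ => deriv (fb p.1) p.2)
    (β : ℕ → V) (hβ : ∀ n : ℕ, 1 ≤ n → β n ≠ 0)
    (hnorm : Tendsto (fun n => ‖β n‖) atTop atTop)
    (hsmall : ∀ n : ℕ, 1 ≤ n →
      fb (‖β n‖⁻¹ • β n) ‖β n‖ / ‖β n‖ < 1 / (n : ℝ))
    (b₀ : V) (ψ : ℕ → ℕ) (hψ : StrictMono ψ) (hψ1 : ∀ k, 1 ≤ ψ k)
    (hlim : Tendsto (fun k => ‖β (ψ k)‖⁻¹ • β (ψ k)) atTop (𝓝 b₀)) :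
    (∀ (f : ℝ → ℝ), ConvexOn ℝ (Ici (0 : ℝ)) f → Differentiable ℝ f → f 0 = 0 →
      ∀ t₀ a : ℝ, 0 < t₀ → t₀ ≤ a → f t₀ + (a - t₀) * deriv f t₀ ≤ f a) ∧
    ∀ t₀ : ℝ, 0 < t₀ → deriv (fb b₀) t₀ ≤ 0 :=
  stmt19_general fb hconv hdiff h0 hcont β hβ hnorm hsmall b₀ ψ hψ hψ1 hlim
end
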